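/- arXiv:math/0310446 — 2 statements merged into one kernel-verified Lean document; each statement's English description precedes it below -/
import Mathlib

section
/- Let K be a field, n ≥ 2, and let C be an n×n matrix over K that is strictly upper triangular (C i j = 0 whenever i ≥ j) and whose superdiagonal entries are all nonzero (C i (i+1) ≠ 0 for all i with i+1 ≤ n−1). Let B be a symmetric n×n matrix over K such that BC is symmetric. Then B vanishes strictly above the anti-diagonal: B i j = 0 whenever i + j < n − 1 (indices running from 0 to n−1). -/
/-!
Read the symmetry of `B * C` at the entry `(i, j + 1)`. Since `C` is strictly upper triangular,
`(B * C) (j + 1) i` only involves `B (j + 1) k = B k (j + 1)` with `k < i`, while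
`(B * C) i (j + 1)` only involves `B i k` with `k ≤ j`. Inducting lexicographically on `(i, j)`,
all these entries except `B i j` vanish, so `B i j * C j (j + 1) = 0`, and the superdiagonal
entry can be cancelled.
-/

open Matrix

namespace Matrix

variable {ι R : Type*} [Fintype ι] [LinearOrder ι] [NonUnitalNonAssocSemiring R]

theorem mul_apply_eq_zero_of_forall_lt {B C : Matrix ι ι R}
    (hC : ∀ i j, j ≤ i → C i j = 0) {l j : ι} (hB : ∀ k < j, B l k = 0) :
    (B * C) l j = 0 := by
  rw [mul_apply]
  refine Finset.sum_eq_zero fun k _ => ?_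
  rcases lt_or_ge k j with hkj | hjk
  · rw [hB k hkj, zero_mul]
  · rw [hC k j hjk, mul_zero]

theorem mul_apply_eq_mul_of_forall_lt_of_forall_gt {B C : Matrix ι ι R} {i j l : ι}
    (hB : ∀ k < j, B i k = 0) (hC : ∀ k, j < k → C k l = 0) :
    (B * C) i l = B i j * C j l := by
  rw [mul_apply]
  refine Finset.sum_eq_single j (fun k _ hkj => ?_) (by simp)
  rcases hkj.lt_or_gt with hkj | hjk
  · rw [hB k hkj, zero_mul]
  · rw [hC k hjk, mul_zero]

theorem IsSymm.eq_zero_of_add_lt_of_isSymm_mul [NoZeroDivisors R] {n : ℕ}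
    {B C : Matrix (Fin n) (Fin n) R} (hB : B.IsSymm) (hBC : (B * C).IsSymm)
    (hCtri : ∀ i j : Fin n, (j : ℕ) ≤ (i : ℕ) → C i j = 0)
    (hCsd : ∀ i : Fin n, ∀ h : (i : ℕ) + 1 < n, C i ⟨(i : ℕ) + 1, h⟩ ≠ 0) :
    ∀ i j : Fin n, (i : ℕ) + (j : ℕ) < n - 1 → B i j = 0 := by
  intro i
  induction i using WellFoundedLT.induction with | _ i ih_row => ?_
  intro j
  induction j using WellFoundedLT.induction with | _ j ih_col => ?_
  intro hij
  have hj : (j : ℕ) + 1 < n := by omega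
  set j' : Fin n := ⟨(j : ℕ) + 1, hj⟩
  have hlower : (B * C) j' i = 0 :=
    mul_apply_eq_zero_of_forall_lt hCtri fun k hk => by
      rw [hB.apply k j']
      exact ih_row k hk j' (by simp only [j']; omega)
  have hupper : (B * C) i j' = B i j * C j j' :=
    mul_apply_eq_mul_of_forall_lt_of_forall_gt
      (fun k hk => ih_col k hk (by omega)) fun k hk => hCtri k j' (by simp only [j']; omega)
  have hprod : B i j * C j j' = 0 := by rw [← hupper, ← hBC.apply, hlower]
  exact (mul_eq_zero.mp hprod).resolve_right (hCsd j hj)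

end Matrix

theorem stmt_1_general {K : Type*} [Field K] {n : ℕ}
    (B C : Matrix (Fin n) (Fin n) K)
    (hCtri : ∀ i j : Fin n, (j : ℕ) ≤ (i : ℕ) → C i j = 0)
    (hCsd : ∀ i : Fin n, ∀ h : (i : ℕ) + 1 < n, C i ⟨(i : ℕ) + 1, h⟩ ≠ 0)
    (hB : Bᵀ = B) (hBC : (B * C)ᵀ = B * C) :
    ∀ i j : Fin n, (i : ℕ) + (j : ℕ) < n - 1 → B i j = 0 :=
  IsSymm.eq_zero_of_add_lt_of_isSymm_mul hB hBC hCtri hCsd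

/-- If `C` is strictly upper triangular with nonzero superdiagonal entries and `B` is
symmetric with `B * C` symmetric, then `B` vanishes strictly above the anti-diagonal. -/
theorem stmt_1 {K : Type*} [Field K] {n : ℕ} (hn : 2 ≤ n)
    (B C : Matrix (Fin n) (Fin n) K)
    (hCtri : ∀ i j : Fin n, (j : ℕ) ≤ (i : ℕ) → C i j = 0)
    (hCsd : ∀ i : Fin n, ∀ h : (i : ℕ) + 1 < n, C i ⟨(i : ℕ) + 1, h⟩ ≠ 0)
    (hB : Bᵀ = B) (hBC : (B * C)ᵀ = B * C) :
    ∀ i j : Fin n, (i : ℕ) + (j : ℕ) < n - 1 → B i j = 0 :=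
  stmt_1_general B C hCtri hCsd hB hBC
end

section
/- Let K be a field, n ≥ 2, and let C be an n×n matrix over K that is strictly upper triangular (C i j = 0 whenever i ≥ j) with all superdiagonal entries nonzero (C i (i+1) ≠ 0 for all i with i+1 ≤ n−1). Let B be a symmetric invertible n×n matrix over K such that BC is symmetric. Then every anti-diagonal entry of B is nonzero: B i (n−1−i) ≠ 0 for every index i. -/
/-!
Write `x = j + 1`. Comparing the `(i, x)` and `(x, i)` entries of the symmetric matrix `B * C`,
where `C` is strictly upper triangular, gives `B i j * C j x = 0` as soon as all entries of `B`
earlier in the order `(i + j, i)` vanish; since `C j x ≠ 0`, induction shows that `B` vanishes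
strictly above the anti-diagonal. Reversing the columns then makes `B` lower triangular, so `det B`
is, up to sign, the product of the anti-diagonal entries.
-/

open Matrix

namespace Matrix

variable {n : ℕ}

theorem apply_eq_zero_of_add_lt_of_isSymm_mul {R : Type*} [Semiring R] [NoZeroDivisors R]
    {B C : Matrix (Fin n) (Fin n) R} (hB : B.IsSymm) (hBC : (B * C).IsSymm)
    (hCtri : ∀ i j : Fin n, (j : ℕ) ≤ i → C i j = 0)
    (hCsd : ∀ i : Fin n, ∀ h : (i : ℕ) + 1 < n, C i ⟨(i : ℕ) + 1, h⟩ ≠ 0)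
    (i j : Fin n) (hij : (i : ℕ) + j + 1 < n) : B i j = 0 := by
  have hj : (j : ℕ) + 1 < n := by omega
  set x : Fin n := ⟨(j : ℕ) + 1, hj⟩ with hx
  have hlhs : (B * C) i x = B i j * C j x := by
    rw [mul_apply]
    refine Finset.sum_eq_single j (fun k _ hk => ?_) (by simp)
    rcases lt_or_gt_of_ne hk with hk | hk
    · rw [apply_eq_zero_of_add_lt_of_isSymm_mul hB hBC hCtri hCsd i k (by omega), zero_mul]
    · rw [hCtri k x (by simp only [hx]; omega), mul_zero]
  have hrhs : (B * C) x i = 0 := by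
    rw [mul_apply]
    refine Finset.sum_eq_zero fun k _ => ?_
    rcases lt_or_ge k i with hk | hk
    · rw [← hB.apply, apply_eq_zero_of_add_lt_of_isSymm_mul hB hBC hCtri hCsd k x
        (by simp only [hx]; omega), zero_mul]
    · rw [hCtri k i hk, mul_zero]
  have hprod : B i j * C j x = 0 := by rw [← hlhs, ← hBC.apply, hrhs]
  exact (mul_eq_zero.mp hprod).resolve_right (hCsd j hj)
termination_by ((i : ℕ) + j, (i : ℕ))
decreasing_by all_goals exact Prod.lex_def.mpr (by omega)

theorem det_eq_sign_mul_prod_antidiagonal {R : Type*} [CommRing R] {M : Matrix (Fin n) (Fin n) R}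
    (hM : ∀ i j : Fin n, (i : ℕ) + j + 1 < n → M i j = 0) :
    M.det = Equiv.Perm.sign (Fin.revPerm (n := n)) * ∏ i, M i i.rev := by
  have hlower : (M.submatrix id Fin.revPerm).IsLowerTriangular := fun i j hij =>
    have hij : i < j := hij
    hM i j.rev (by rw [Fin.val_rev]; omega)
  have hperm : ∏ i, M i i.rev = Equiv.Perm.sign (Fin.revPerm (n := n)) * M.det := by
    rw [← det_permute', det_of_isLowerTriangular _ hlower]
    rfl
  rw [hperm, ← mul_assoc, ← Int.cast_mul, ← Units.val_mul, Int.units_mul_self, Units.val_one,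
    Int.cast_one, one_mul]

end Matrix

theorem stmt_2_general {K : Type*} [Field K] {n : ℕ}
    (B C : Matrix (Fin n) (Fin n) K)
    (hCtri : ∀ i j : Fin n, (j : ℕ) ≤ (i : ℕ) → C i j = 0)
    (hCsd : ∀ i : Fin n, ∀ h : (i : ℕ) + 1 < n, C i ⟨(i : ℕ) + 1, h⟩ ≠ 0)
    (hB : Bᵀ = B) (hBinv : IsUnit B) (hBC : (B * C)ᵀ = B * C) :
    ∀ i : Fin n, B i i.rev ≠ 0 := by
  have hdet : B.det ≠ 0 := ((isUnit_iff_isUnit_det B).mp hBinv).ne_zero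
  rw [det_eq_sign_mul_prod_antidiagonal
    (apply_eq_zero_of_add_lt_of_isSymm_mul hB hBC hCtri hCsd)] at hdet
  exact fun i => Finset.prod_ne_zero_iff.mp (right_ne_zero_of_mul hdet) i (Finset.mem_univ i)

/-- If `C` is strictly upper triangular with nonzero superdiagonal entries and `B` is a
symmetric invertible matrix with `B * C` symmetric, then every anti-diagonal entry of `B`
is nonzero. -/
theorem stmt_2 {K : Type*} [Field K] {n : ℕ} (hn : 2 ≤ n)
    (B C : Matrix (Fin n) (Fin n) K)
    (hCtri : ∀ i j : Fin n, (j : ℕ) ≤ (i : ℕ) → C i j = 0)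
    (hCsd : ∀ i : Fin n, ∀ h : (i : ℕ) + 1 < n, C i ⟨(i : ℕ) + 1, h⟩ ≠ 0)
    (hB : Bᵀ = B) (hBinv : IsUnit B) (hBC : (B * C)ᵀ = B * C) :
    ∀ i : Fin n, B i i.rev ≠ 0 :=
  stmt_2_general B C hCtri hCsd hB hBinv hBC
end
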